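/- arXiv:2008.02140 — 2 statements merged into one kernel-verified Lean document; each statement's English description precedes it below -/
import Mathlib

section
/- Soundness of flexible coSLD resolution with respect to the regular declarative semantics: for every logic program with coclauses (P,coP), every finite sequence G of finite atoms and all finite sets of equations E, E', if the operational semantics judgment P;coP ⊢ ∅ : ⟨G | E⟩ ⇒ E' is derivable and σ ∈ sol(E'), then σ ∈ Ans(G, E, FlexReg(P,coP)). -/
/- Framework: flexible coinductive logic programming (logic programs with coclauses).
   Terms are possibly infinite trees, modelled as M-types of a polynomial functor. -/

namespace FlexLP

/-- A first-order signature: function symbols and predicate symbols, each with an arity.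
Variables are represented by natural numbers (a countably infinite set). -/
structure Sig where
  Func : Type
  far : Func → ℕ
  Pred : Type
  par : Pred → ℕ

/-- Polynomial functor whose M-type is the type of possibly infinite terms:
nodes are labelled by function symbols (with `far` children) or variables (no children). -/
def TermP (S : Sig) : PFunctor :=
  ⟨S.Func ⊕ ℕ, fun l => Fin (match l with | Sum.inl f => S.far f | Sum.inr _ => 0)⟩

/-- Possibly infinite terms over the signature `S`. -/
def Term (S : Sig) : Type := (TermP S).M

/-- The term consisting of a single variable `x`. -/
def Term.var (S : Sig) (x : ℕ) : Term S :=
  PFunctor.M.mk ⟨Sum.inr x, fun i => i.elim0⟩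

/-- The variable `x` occurs in the term `t`. -/
inductive Term.Occurs (S : Sig) (x : ℕ) : Term S → Prop
  | root (t : Term S) (h : (PFunctor.M.dest t).1 = Sum.inr x) : Term.Occurs S x t
  | child (t : Term S) (i : (TermP S).B (PFunctor.M.dest t).1)
      (h : Term.Occurs S x ((PFunctor.M.dest t).2 i)) : Term.Occurs S x t

/-- The term `t` is finite (syntactic): all its branches are finite. -/
inductive Term.IsFinite (S : Sig) : Term S → Prop
  | mk (t : Term S) (h : ∀ i, Term.IsFinite S ((PFunctor.M.dest t).2 i)) : Term.IsFinite S t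

/-- The term `t` is ground: no variable occurs in it. -/
def Term.Ground (S : Sig) (t : Term S) : Prop := ∀ x, ¬ Term.Occurs S x t

/-- A substitution: a map from a finite set of variables to terms. -/
structure Subst (S : Sig) where
  toFun : ℕ → Option (Term S)
  finDom : {x | (toFun x).isSome}.Finite

/-- Domain of a substitution. -/
def Subst.dom {S : Sig} (σ : Subst S) : Set ℕ := {x | (σ.toFun x).isSome}

/-- A substitution is ground if all its values are ground terms. -/
def Subst.Ground {S : Sig} (σ : Subst S) : Prop :=
  ∀ x t, σ.toFun x = some t → Term.Ground S t

/-- `σ ⊑ θ` : `dom σ ⊆ dom θ` and the two substitutions agree on `dom σ`. -/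
def Subst.le {S : Sig} (σ θ : Subst S) : Prop :=
  ∀ x t, σ.toFun x = some t → θ.toFun x = some t

/-- One step of (simultaneous) substitution application, as a coalgebra.
The boolean flag records whether we are still in the original term (`true`)
or inside a substituted term (`false`). -/
def substStep (S : Sig) (σ : Subst S) : Term S × Bool → (TermP S).Obj (Term S × Bool) :=
  fun p =>
    match PFunctor.M.dest p.1, p.2 with
    | ⟨Sum.inl f, ch⟩, b => ⟨Sum.inl f, fun i => (ch i, b)⟩
    | ⟨Sum.inr x, ch⟩, true =>
        match σ.toFun x with
        | some s =>
            match PFunctor.M.dest s with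
            | ⟨l, ch'⟩ => ⟨l, fun i => (ch' i, false)⟩
        | none => ⟨Sum.inr x, fun i => (ch i, true)⟩
    | ⟨Sum.inr x, ch⟩, false => ⟨Sum.inr x, fun i => (ch i, false)⟩

/-- Application `tσ` of a substitution to a term. -/
def Term.subst {S : Sig} (t : Term S) (σ : Subst S) : Term S :=
  PFunctor.M.corec (substStep S σ) (t, true)

/-- Atoms: a predicate symbol applied to terms (a possibly infinite tree whose
root is labelled by a predicate symbol). -/
structure Atom (S : Sig) where
  pred : S.Pred
  args : Fin (S.par pred) → Term S

/-- The variable `x` occurs in the atom `A`. -/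
def Atom.Occurs {S : Sig} (x : ℕ) (A : Atom S) : Prop := ∃ i, Term.Occurs S x (A.args i)

/-- Ground atoms. The set of all ground atoms is the complete Herbrand base. -/
def Atom.Ground {S : Sig} (A : Atom S) : Prop := ∀ i, Term.Ground S (A.args i)

/-- Finite (syntactic) atoms. -/
def Atom.IsFinite {S : Sig} (A : Atom S) : Prop := ∀ i, Term.IsFinite S (A.args i)

/-- Application of a substitution to an atom. -/
def Atom.subst {S : Sig} (A : Atom S) (σ : Subst S) : Atom S :=
  ⟨A.pred, fun i => Term.subst (A.args i) σ⟩

/-- A (definite) clause `head :- body`, made of finite atoms. -/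
structure Clause (S : Sig) where
  head : Atom S
  body : List (Atom S)
  finHead : head.IsFinite
  finBody : ∀ B ∈ body, B.IsFinite

/-- Variables occurring in a clause. -/
def clauseVars {S : Sig} (C : Clause S) : Set ℕ :=
  {x | Atom.Occurs x C.head ∨ ∃ B ∈ C.body, Atom.Occurs x B}

/-- `Ground P` : the ground instances of clauses of `P`, viewed as inference rules
(pairs premises/conclusion) on the complete Herbrand base. -/
def GroundInst {S : Sig} (P : Set (Clause S)) : Set (Atom S × List (Atom S)) :=
  {r | ∃ C ∈ P, ∃ σ : Subst S, σ.Ground ∧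
        r.1 = C.head.subst σ ∧ r.2 = C.body.map (fun B => B.subst σ) ∧
        r.1.Ground ∧ ∀ B ∈ r.2, B.Ground}

/-- The (one step) inference operator `T_P` associated to a program. -/
def TP {S : Sig} (P : Set (Clause S)) (I : Set (Atom S)) : Set (Atom S) :=
  {A | ∃ r ∈ GroundInst P, r.1 = A ∧ ∀ B ∈ r.2, B ∈ I}

/-- `I` is a model of `P`. -/
def IsModel {S : Sig} (P : Set (Clause S)) (I : Set (Atom S)) : Prop := TP P I ⊆ I

/-- `I` is a comodel of `P`. -/
def IsComodel {S : Sig} (P : Set (Clause S)) (I : Set (Atom S)) : Prop := I ⊆ TP P I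

/-- `Ind P` : the inductive declarative semantics, i.e. the least model of `P`. -/
def Ind {S : Sig} (P : Set (Clause S)) : Set (Atom S) := ⋂₀ {I | IsModel P I}

/-- `FlexCo (P,coP)` : the declarative semantics of a logic program with coclauses,
i.e. the largest comodel of `P` included in `Ind (P ∪ coP)` (union of all such comodels). -/
def FlexCo {S : Sig} (P coP : Set (Clause S)) : Set (Atom S) :=
  ⋃₀ {I | IsComodel P I ∧ I ⊆ Ind (P ∪ coP)}

/-- `FlexReg (P,coP)` : the regular declarative semantics, i.e. the union of all
finite comodels of `P` included in `Ind (P ∪ coP)`. -/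
def FlexReg {S : Sig} (P coP : Set (Clause S)) : Set (Atom S) :=
  ⋃₀ {I | I.Finite ∧ IsComodel P I ∧ I ⊆ Ind (P ∪ coP)}

/-- An equation `s ≐ t` between terms. -/
abbrev Eqn (S : Sig) := Term S × Term S

/-- Variables occurring in a set of equations. -/
def eqnVars {S : Sig} (E : Set (Eqn S)) : Set ℕ :=
  {x | ∃ e ∈ E, Term.Occurs S x e.1 ∨ Term.Occurs S x e.2}

/-- `E` is a finite set of equations between finite (syntactic) terms. -/
def EqnSetFin {S : Sig} (E : Set (Eqn S)) : Prop :=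
  E.Finite ∧ ∀ e ∈ E, Term.IsFinite S e.1 ∧ Term.IsFinite S e.2

/-- `sol E` : the set of solutions of `E`, i.e. ground substitutions defined on all
variables of `E` that unify all the equations in `E`. -/
def sol {S : Sig} (E : Set (Eqn S)) : Set (Subst S) :=
  {σ | σ.Ground ∧ eqnVars E ⊆ σ.dom ∧ ∀ e ∈ E, e.1.subst σ = e.2.subst σ}

/-- `E` is solvable. -/
def Solvable {S : Sig} (E : Set (Eqn S)) : Prop := (sol E).Nonempty

/-- `eqs(A,B)` : the equations between the corresponding arguments of two atoms
with the same predicate symbol. -/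
def atomEqs {S : Sig} (A B : Atom S) : Set (Eqn S) :=
  {e | ∃ (h : A.pred = B.pred) (i : Fin (S.par A.pred)),
        e = (A.args i, B.args (Fin.cast (congrArg S.par h) i))}

/-- Variables occurring in a set of atoms. -/
def atomsVars {S : Sig} (H : Set (Atom S)) : Set ℕ := {x | ∃ A ∈ H, Atom.Occurs x A}

/-- Variables occurring in a sequence of atoms (a goal). -/
def goalVars {S : Sig} (G : List (Atom S)) : Set ℕ := {x | ∃ A ∈ G, Atom.Occurs x A}

/-- `ρ` is a renaming of the variables of clause `C` to fresh variables avoiding `avoid`: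
it maps (injectively) every variable of `C` to a variable not in `avoid`. -/
def FreshRenamingFor {S : Sig} (ρ : Subst S) (C : Clause S) (avoid : Set ℕ) : Prop :=
  (∀ x t, ρ.toFun x = some t → ∃ y, t = Term.var S y ∧ y ∉ avoid) ∧
  clauseVars C ⊆ ρ.dom ∧
  (∀ x y, ρ.toFun x = ρ.toFun y → (ρ.toFun x).isSome → x = y)

/-- The big-step operational semantics judgment `P;coP ⊢ H : ⟨G | E⟩ ⇒ E'` of
flexible coSLD resolution, inductively defined by the rules (empty), (co-hyp), (step). -/
inductive OpSem (S : Sig) :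
    Set (Clause S) → Set (Clause S) → Set (Atom S) → List (Atom S) →
      Set (Eqn S) → Set (Eqn S) → Prop
  | empty (P coP : Set (Clause S)) (H : Set (Atom S)) (E : Set (Eqn S)) :
      OpSem S P coP H [] E E
  | cohyp {P coP : Set (Clause S)} {H : Set (Atom S)} {G1 G2 : List (Atom S)}
      {A B : Atom S} {E1 E2 E3 : Set (Eqn S)} :
      coP ≠ ∅ → B ∈ H → A.pred = B.pred →
      Solvable (E1 ∪ atomEqs A B) →
      OpSem S (P ∪ coP) ∅ ∅ [A] (E1 ∪ atomEqs A B) E2 →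
      OpSem S P coP H (G1 ++ G2) E2 E3 →
      OpSem S P coP H (G1 ++ A :: G2) E1 E3
  | step {P coP : Set (Clause S)} {H : Set (Atom S)} {G1 G2 : List (Atom S)}
      {A : Atom S} {E1 E2 E3 : Set (Eqn S)} (C : Clause S) (ρ : Subst S) :
      C ∈ P →
      FreshRenamingFor ρ C (eqnVars E1 ∪ atomsVars H ∪ goalVars (G1 ++ A :: G2)) →
      A.pred = C.head.pred →
      Solvable (E1 ∪ atomEqs A (C.head.subst ρ)) →
      OpSem S P coP (H ∪ {A}) (C.body.map (fun B => B.subst ρ))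
        (E1 ∪ atomEqs A (C.head.subst ρ)) E2 →
      OpSem S P coP H (G1 ++ G2) E2 E3 →
      OpSem S P coP H (G1 ++ A :: G2) E1 E3

/-- `Ans(G,E,I)` : the set of answers to the goal `⟨G | E⟩` correct in the
interpretation `I`. -/
def Ans {S : Sig} (G : List (Atom S)) (E : Set (Eqn S)) (I : Set (Atom S)) :
    Set (Subst S) :=
  {σ | σ ∈ sol E ∧ goalVars G ⊆ σ.dom ∧ ∀ A ∈ G, A.subst σ ∈ I}

/-- The inductive interpretation of the inference system `Loop(P,coP)`, whose judgments
`H ⊢ A` pair a ground atom with a set of ground atoms (circular hypotheses);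
rules: (hp) `H ⊢ A` if `A ∈ H` and `A ∈ Ind (P ∪ coP)`;
(rule) from `H∪{A} ⊢ B` for every premise `B` of a ground instance of a clause of `P`
with conclusion `A`, infer `H ⊢ A`. -/
inductive LoopInd {S : Sig} (P coP : Set (Clause S)) : Set (Atom S) → Atom S → Prop
  | hp {H : Set (Atom S)} {A : Atom S} :
      A ∈ H → A ∈ Ind (P ∪ coP) → LoopInd P coP H A
  | rule {H : Set (Atom S)} {A : Atom S} (r : Atom S × List (Atom S)) :
      r ∈ GroundInst P → r.1 = A →
      (∀ B ∈ r.2, LoopInd P coP (H ∪ {A}) B) →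
      LoopInd P coP H A

/-! Under a solution `σ` of the final equations, a derivation of `H : ⟨G | E⟩ ⇒ E'` becomes a
derivation, in the inductive system `Loop(P,coP)`, of every atom of `Gσ` from the circular
hypotheses `Hσ`: a (step) with clause `C` renamed by `ρ` becomes a `rule` with the ground
instance of `C` under `ρ` followed by `σ`, and a (co-hyp) becomes `hp`, its subderivation for
`P ∪ coP` giving membership in `Ind(P ∪ coP)`. The finitely many atoms concluded in a
derivation of `∅ ⊢ A` all lie in `Ind(P ∪ coP)` and form a comodel of `P`, since each premise
of a rule is either concluded again or a hypothesis, i.e. concluded further down. Hence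
`A ∈ FlexReg(P,coP)`. -/

variable {S : Sig}

lemma _root_.PFunctor.Obj.exists_snd_eq {P : PFunctor} {X : Type*} {p : P.Obj X} {l : P.A}
    {F : P.B l → X} (h : p = ⟨l, F⟩) (i : P.B p.1) : ∃ j : P.B l, p.2 i = F j := by
  subst h; exact ⟨i, rfl⟩

lemma substStep_false (σ : Subst S) (t : Term S) :
    substStep S σ (t, false) =
      ⟨(PFunctor.M.dest t).1, fun i => ((PFunctor.M.dest t).2 i, false)⟩ := by
  unfold substStep
  rcases PFunctor.M.dest t with ⟨_ | _, _⟩ <;> rfl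

lemma corec_substStep_false (σ : Subst S) (t : Term S) :
    PFunctor.M.corec (substStep S σ) (t, false) = t := by
  refine PFunctor.M.bisim
    (fun (u v : Term S) => u = PFunctor.M.corec (substStep S σ) (v, false))
    (fun u v huv => ?_) _ _ rfl
  refine ⟨(PFunctor.M.dest v).1,
    fun i => PFunctor.M.corec (substStep S σ) ((PFunctor.M.dest v).2 i, false),
    (PFunctor.M.dest v).2, ?_, rfl, fun i => rfl⟩
  rw [huv, PFunctor.M.dest_corec]
  erw [substStep_false]
  rfl

namespace Term

lemma Occurs.of_dest_eq_var {x : ℕ} {t : Term S} {ch}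
    (he : PFunctor.M.dest t = ⟨Sum.inr x, ch⟩) : Term.Occurs S x t :=
  Term.Occurs.root t (by rw [he])

lemma Occurs.of_dest_eq {x : ℕ} {t : Term S} {l ch} (he : PFunctor.M.dest t = ⟨l, ch⟩)
    {i : (TermP S).B l} (h : Term.Occurs S x (ch i)) : Term.Occurs S x t := by
  have hchild := Term.Occurs.child (S := S) (x := x) t
  rw [he] at hchild
  exact hchild i h

lemma dest_subst_of_dest_eq_inl {σ : Subst S} {t : Term S} {f}
    {ch : (TermP S).B (Sum.inl f) → Term S} (he : PFunctor.M.dest t = ⟨Sum.inl f, ch⟩) :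
    PFunctor.M.dest (t.subst σ) = ⟨Sum.inl f, fun i => Term.subst (ch i) σ⟩ := by
  rw [Term.subst, PFunctor.M.dest_corec]
  unfold substStep
  rw [he]
  rfl

lemma subst_of_dest_eq_inl {σ : Subst S} {t : Term S} {f}
    {ch : (TermP S).B (Sum.inl f) → Term S} (he : PFunctor.M.dest t = ⟨Sum.inl f, ch⟩) :
    t.subst σ = PFunctor.M.mk ⟨Sum.inl f, fun i => Term.subst (ch i) σ⟩ := by
  rw [← dest_subst_of_dest_eq_inl he]
  exact (PFunctor.M.mk_dest _).symm

lemma subst_of_dest_eq_var {σ : Subst S} {t s : Term S} {x ch}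
    (he : PFunctor.M.dest t = ⟨Sum.inr x, ch⟩) (hs : σ.toFun x = some s) : t.subst σ = s := by
  rw [← PFunctor.M.mk_dest (t.subst σ), ← PFunctor.M.mk_dest s, Term.subst,
    PFunctor.M.dest_corec]
  unfold substStep
  simp only [he, hs]
  exact congrArg PFunctor.M.mk
    (congrArg (Sigma.mk _) (funext fun i => corec_substStep_false σ _))

lemma Occurs.exists_of_subst {σ : Subst S} {t : Term S} {y : ℕ}
    (hv : ∀ x, Term.Occurs S x t → x ∈ σ.dom) (h : Term.Occurs S y (t.subst σ)) :
    ∃ x s, Term.Occurs S x t ∧ σ.toFun x = some s ∧ Term.Occurs S y s := by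
  generalize hu : t.subst σ = u at h
  induction h generalizing t with
  | root u hr =>
    rcases hd : PFunctor.M.dest t with ⟨_ | x, ch⟩
    · rw [← hu, dest_subst_of_dest_eq_inl hd] at hr
      cases hr
    · obtain ⟨s, hs⟩ := Option.isSome_iff_exists.mp (hv x (.of_dest_eq_var hd))
      refine ⟨x, s, .of_dest_eq_var hd, hs, ?_⟩
      rw [← subst_of_dest_eq_var hd hs, hu]
      exact .root u hr
  | child u i hocc ih =>
    rcases hd : PFunctor.M.dest t with ⟨_ | x, ch⟩
    · obtain ⟨j, hj⟩ := PFunctor.Obj.exists_snd_eq (hu ▸ dest_subst_of_dest_eq_inl hd) i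
      obtain ⟨x, s, hx, hs, hy⟩ := ih (fun x hx => hv x (.of_dest_eq hd hx)) hj.symm
      exact ⟨x, s, .of_dest_eq hd hx, hs, hy⟩
    · obtain ⟨s, hs⟩ := Option.isSome_iff_exists.mp (hv x (.of_dest_eq_var hd))
      refine ⟨x, s, .of_dest_eq_var hd, hs, ?_⟩
      rw [← subst_of_dest_eq_var hd hs, hu]
      exact .child u i hocc

lemma Occurs.subst {ρ : Subst S} {x y : ℕ} {s t : Term S}
    (h : Term.Occurs S x t) (hx : ρ.toFun x = some s) (hy : Term.Occurs S y s) :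
    Term.Occurs S y (t.subst ρ) := by
  induction h with
  | root t hr =>
    rcases hd : PFunctor.M.dest t with ⟨l, ch⟩
    rw [hd] at hr
    subst hr
    rwa [subst_of_dest_eq_var hd hx]
  | child t i _ ih =>
    rcases hd : PFunctor.M.dest t with ⟨_ | _, ch⟩
    · obtain ⟨j, hj⟩ := PFunctor.Obj.exists_snd_eq hd i
      exact .of_dest_eq (dest_subst_of_dest_eq_inl hd) (i := j) (hj ▸ ih)
    · obtain ⟨j, -⟩ := PFunctor.Obj.exists_snd_eq hd i
      exact j.elim0

lemma ground_subst {σ : Subst S} (hσ : σ.Ground) {t : Term S}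
    (hv : ∀ x, Term.Occurs S x t → x ∈ σ.dom) : Term.Ground S (t.subst σ) := fun _ hy =>
  let ⟨x, s, _, hs, hys⟩ := Occurs.exists_of_subst hv hy
  hσ x s hs _ hys

end Term

/-- The composite `x ↦ (ρ x)σ`, computed only where `ρ x` is a variable (the case of a
renaming `ρ`); elsewhere it is undefined. -/
def Subst.comp (ρ σ : Subst S) : Subst S where
  toFun x := (ρ.toFun x).bind fun s =>
    match (PFunctor.M.dest s).1 with
    | Sum.inr y => σ.toFun y
    | Sum.inl _ => none
  finDom := ρ.finDom.subset fun x hx => by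
    cases h : ρ.toFun x <;> simp_all

lemma Subst.comp_apply_of_eq_var {ρ σ : Subst S} {x y : ℕ}
    (h : ρ.toFun x = some (Term.var S y)) : (ρ.comp σ).toFun x = σ.toFun y := by
  simp only [Subst.comp, h, Option.bind_some]
  rfl

lemma Subst.Ground.comp {σ : Subst S} (hσ : σ.Ground) (ρ : Subst S) : (ρ.comp σ).Ground := by
  intro x t ht
  simp only [Subst.comp] at ht
  rcases hρ : ρ.toFun x with _ | s
  · simp [hρ] at ht
  · simp only [hρ, Option.bind_some] at ht
    rcases hs : (PFunctor.M.dest s).1 with _ | y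
    · simp [hs] at ht
    · exact hσ y t (by simpa [hs] using ht)

lemma Term.subst_subst_of_renaming {ρ σ : Subst S} {t : Term S} (ht : Term.IsFinite S t)
    (hv : ∀ x, Term.Occurs S x t → ∃ y, ρ.toFun x = some (Term.var S y) ∧ y ∈ σ.dom) :
    (t.subst ρ).subst σ = t.subst (ρ.comp σ) := by
  induction ht with
  | mk t _ ih =>
    rcases hd : PFunctor.M.dest t with ⟨_ | x, ch⟩
    · rw [hd] at ih
      rw [Term.subst_of_dest_eq_inl (Term.dest_subst_of_dest_eq_inl hd),
        Term.subst_of_dest_eq_inl hd]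
      exact congrArg PFunctor.M.mk (congrArg (Sigma.mk _)
        (funext fun i => ih i fun x hx => hv x (.of_dest_eq hd hx)))
    · obtain ⟨y, hy, hyσ⟩ := hv x (.of_dest_eq_var hd)
      obtain ⟨s, hs⟩ := Option.isSome_iff_exists.mp hyσ
      rw [Term.subst_of_dest_eq_var hd hy, Term.subst_of_dest_eq_var rfl hs,
        Term.subst_of_dest_eq_var hd ((Subst.comp_apply_of_eq_var hy).trans hs)]

namespace Atom

lemma Occurs.subst {ρ : Subst S} {A : Atom S} {x y : ℕ} {s : Term S} (h : A.Occurs x)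
    (hx : ρ.toFun x = some s) (hy : Term.Occurs S y s) : (A.subst ρ).Occurs y :=
  let ⟨i, hi⟩ := h
  ⟨i, hi.subst hx hy⟩

lemma ground_subst {σ : Subst S} (hσ : σ.Ground) {A : Atom S}
    (hv : ∀ x, A.Occurs x → x ∈ σ.dom) : (A.subst σ).Ground := fun i =>
  Term.ground_subst hσ fun x hx => hv x ⟨i, hx⟩

lemma subst_subst_of_renaming {ρ σ : Subst S} {A : Atom S} (hA : A.IsFinite)
    (hv : ∀ x, A.Occurs x → ∃ y, ρ.toFun x = some (Term.var S y) ∧ y ∈ σ.dom) :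
    (A.subst ρ).subst σ = A.subst (ρ.comp σ) :=
  congrArg (Atom.mk A.pred) <| funext fun i =>
    Term.subst_subst_of_renaming (hA i) fun x hx => hv x ⟨i, hx⟩

lemma subst_eq_of_mem_sol_atomEqs {σ : Subst S} {A B : Atom S} (hAB : A.pred = B.pred)
    (hσ : σ ∈ sol (atomEqs A B)) : A.subst σ = B.subst σ := by
  obtain ⟨p, a⟩ := A
  obtain ⟨q, b⟩ := B
  obtain rfl : p = q := hAB
  exact congrArg (Atom.mk p) <| funext fun i => hσ.2.2 _ ⟨rfl, i, rfl⟩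

lemma occurs_subset_eqnVars_atomEqs {A B : Atom S} (hAB : A.pred = B.pred) :
    {x | A.Occurs x} ∪ {x | B.Occurs x} ⊆ eqnVars (atomEqs A B) := by
  rintro x (⟨i, hi⟩ | ⟨i, hi⟩)
  · exact ⟨_, ⟨hAB, i, rfl⟩, Or.inl hi⟩
  · refine ⟨_, ⟨hAB, Fin.cast (congrArg S.par hAB).symm i, rfl⟩, Or.inr ?_⟩
    simpa using hi

end Atom

lemma sol_anti {E F : Set (Eqn S)} (h : E ⊆ F) : sol F ⊆ sol E :=
  fun _ ⟨hg, hd, hs⟩ => ⟨hg, fun _ ⟨e, he, ho⟩ => hd ⟨e, h he, ho⟩, fun e he => hs e (h he)⟩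

lemma GroundInst.mono {P Q : Set (Clause S)} (h : P ⊆ Q) : GroundInst P ⊆ GroundInst Q :=
  fun _ ⟨C, hC, hr⟩ => ⟨C, h hC, hr⟩

lemma TP_mono (P : Set (Clause S)) {I J : Set (Atom S)} (h : I ⊆ J) : TP P I ⊆ TP P J :=
  fun _ ⟨r, hr, h1, h2⟩ => ⟨r, hr, h1, fun B hB => h (h2 B hB)⟩

lemma isModel_Ind (P : Set (Clause S)) : IsModel P (Ind P) :=
  fun _ ⟨r, hr, h1, h2⟩ => Set.mem_sInter.mpr fun I hI =>
    hI ⟨r, hr, h1, fun B hB => Set.mem_sInter.mp (h2 B hB) I hI⟩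

lemma FreshRenamingFor.exists_eq_var {ρ : Subst S} {C : Clause S} {avoid : Set ℕ}
    (hρ : FreshRenamingFor ρ C avoid) {x : ℕ} (hx : x ∈ clauseVars C) :
    ∃ y, ρ.toFun x = some (Term.var S y) ∧
      ((C.head.subst ρ).Occurs y ∨ y ∈ goalVars (C.body.map (Atom.subst · ρ))) := by
  obtain ⟨t, ht⟩ := Option.isSome_iff_exists.mp (hρ.2.1 hx)
  obtain ⟨y, rfl, -⟩ := hρ.1 x t ht
  have hy : Term.Occurs S y (Term.var S y) := .root _ rfl
  refine ⟨y, ht, ?_⟩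
  rcases hx with hx | ⟨B, hB, hx⟩
  · exact Or.inl (hx.subst ht hy)
  · exact Or.inr ⟨_, List.mem_map_of_mem hB, hx.subst ht hy⟩

namespace LoopInd

variable {P coP : Set (Clause S)} {H : Set (Atom S)} {A : Atom S}

lemma mem_Ind (h : LoopInd P coP H A) : A ∈ Ind (P ∪ coP) := by
  induction h with
  | hp _ hA => exact hA
  | rule r hr h1 _ ih =>
    exact isModel_Ind _ ⟨r, GroundInst.mono Set.subset_union_left hr, h1, ih⟩

/-- `I` is the set of atoms concluded by `rule` in the derivation. -/
lemma exists_finite_subset_TP (h : LoopInd P coP H A) :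
    ∃ I : Set (Atom S), I.Finite ∧ A ∈ I ∪ H ∧ I ⊆ Ind (P ∪ coP) ∧ I ⊆ TP P (I ∪ H) := by
  induction h with
  | hp hA _ => exact ⟨∅, Set.finite_empty, Or.inr hA, Set.empty_subset _, Set.empty_subset _⟩
  | @rule H A r hr h1 hprem ih =>
    choose! I hfin hmem hind hclo using ih
    set J := insert A (⋃ B ∈ {B | B ∈ r.2}, I B)
    have hsub : ∀ B ∈ r.2, I B ∪ (H ∪ {A}) ⊆ J ∪ H := fun B hB => by
      rintro C (hC | hC | rfl)
      · exact Or.inl (Set.mem_insert_of_mem _ (Set.mem_biUnion hB hC))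
      · exact Or.inr hC
      · exact Or.inl (Set.mem_insert _ _)
    refine ⟨J, ((List.finite_toSet r.2).biUnion hfin).insert A, Or.inl (Set.mem_insert _ _),
      Set.insert_subset ((LoopInd.rule r hr h1 hprem).mem_Ind) (Set.iUnion₂_subset hind),
      Set.insert_subset ⟨r, hr, h1, fun B hB => hsub B hB (hmem B hB)⟩
        (Set.iUnion₂_subset fun B hB => (hclo B hB).trans (TP_mono P (hsub B hB)))⟩

lemma mem_FlexReg (h : LoopInd P coP ∅ A) : A ∈ FlexReg P coP := by
  obtain ⟨I, hfin, hA, hind, hclo⟩ := h.exists_finite_subset_TP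
  rw [Set.union_empty] at hA hclo
  exact ⟨I, ⟨hfin, hclo, hind⟩, hA⟩

lemma of_renamed_clause {C : Clause S} {ρ σ : Subst S} (hC : C ∈ P) (hσ : σ.Ground)
    (hv : ∀ x ∈ clauseVars C, ∃ y, ρ.toFun x = some (Term.var S y) ∧ y ∈ σ.dom)
    (hprem : ∀ B ∈ C.body,
      LoopInd P coP (H ∪ {(C.head.subst ρ).subst σ}) ((B.subst ρ).subst σ)) :
    LoopInd P coP H ((C.head.subst ρ).subst σ) := by
  have hdom : ∀ x ∈ clauseVars C, x ∈ (ρ.comp σ).dom := fun x hx => by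
    obtain ⟨y, hy, hyσ⟩ := hv x hx
    simpa [Subst.dom, Subst.comp_apply_of_eq_var hy] using hyσ
  have hhead := Atom.subst_subst_of_renaming C.finHead fun x hx => hv x (Or.inl hx)
  have hbody : ∀ B ∈ C.body, (B.subst ρ).subst σ = B.subst (ρ.comp σ) := fun B hB =>
    Atom.subst_subst_of_renaming (C.finBody B hB) fun x hx => hv x (Or.inr ⟨B, hB, hx⟩)
  rw [hhead] at hprem ⊢
  refine LoopInd.rule (C.head.subst (ρ.comp σ), C.body.map (Atom.subst · (ρ.comp σ)))
    ⟨C, hC, ρ.comp σ, hσ.comp ρ, rfl, rfl,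
    Atom.ground_subst (hσ.comp ρ) fun x hx => hdom x (Or.inl hx), ?_⟩ rfl ?_
  · simp only [List.mem_map]
    rintro _ ⟨B, hB, rfl⟩
    exact Atom.ground_subst (hσ.comp ρ) fun x hx => hdom x (Or.inr ⟨B, hB, hx⟩)
  · simp only [List.mem_map]
    rintro _ ⟨B, hB, rfl⟩
    exact hbody B hB ▸ hprem B hB

end LoopInd

lemma Ans_mono {G : List (Atom S)} {E : Set (Eqn S)} {I J : Set (Atom S)} (h : I ⊆ J) :
    Ans G E I ⊆ Ans G E J :=
  fun _ ⟨hσ, hdom, hG⟩ => ⟨hσ, hdom, fun A hA => h (hG A hA)⟩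

lemma mem_Ans_append_cons {G₁ G₂ : List (Atom S)} {A : Atom S} {E E' : Set (Eqn S)}
    {I : Set (Atom S)} {σ : Subst S} (hσ : σ ∈ sol E) (hG : σ ∈ Ans (G₁ ++ G₂) E' I)
    (hA : ∀ x, A.Occurs x → x ∈ σ.dom) (hAI : A.subst σ ∈ I) :
    σ ∈ Ans (G₁ ++ A :: G₂) E I := by
  refine ⟨hσ, ?_, ?_⟩
  · rintro x ⟨B, hB, hx⟩
    simp only [List.mem_append, List.mem_cons] at hB
    rcases hB with hB | rfl | hB
    · exact hG.2.1 ⟨B, List.mem_append_left _ hB, hx⟩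
    · exact hA x hx
    · exact hG.2.1 ⟨B, List.mem_append_right _ hB, hx⟩
  · intro B hB
    simp only [List.mem_append, List.mem_cons] at hB
    rcases hB with hB | rfl | hB
    · exact hG.2.2 B (List.mem_append_left _ hB)
    · exact hAI
    · exact hG.2.2 B (List.mem_append_right _ hB)

theorem OpSem.mem_Ans_loopInd {P coP : Set (Clause S)} {H : Set (Atom S)} {G : List (Atom S)}
    {E E' : Set (Eqn S)} (h : OpSem S P coP H G E E') :
    ∀ σ ∈ sol E', σ ∈ Ans G E {A | LoopInd P coP ((Atom.subst · σ) '' H) A} := by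
  induction h with
  | empty => exact fun σ hσ => ⟨hσ, fun _ ⟨_, hA, _⟩ => absurd hA List.not_mem_nil, by simp⟩
  | @cohyp P coP H G₁ G₂ A B E₁ E₂ E₃ _ hB hAB _ _ _ ihA ihG =>
    intro σ hσ₃
    have hσG := ihG σ hσ₃
    have hσA := ihA σ hσG.1
    have hσeqs : σ ∈ sol (atomEqs A B) := sol_anti Set.subset_union_right hσA.1
    have hAInd : A.subst σ ∈ Ind (P ∪ coP) := by
      simpa using (hσA.2.2 A (List.mem_singleton_self A)).mem_Ind
    refine mem_Ans_append_cons (sol_anti Set.subset_union_left hσA.1) hσG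
      (fun x hx => hσeqs.2.1 (Atom.occurs_subset_eqnVars_atomEqs hAB (Or.inl hx))) ?_
    exact LoopInd.hp ⟨B, hB, (Atom.subst_eq_of_mem_sol_atomEqs hAB hσeqs).symm⟩ hAInd
  | @step P coP H G₁ G₂ A E₁ E₂ E₃ C ρ hC hρ hAC _ _ _ ihBody ihG =>
    replace hAC : A.pred = (C.head.subst ρ).pred := hAC
    intro σ hσ₃
    have hσG := ihG σ hσ₃
    have hσBody := ihBody σ hσG.1
    have hσeqs : σ ∈ sol (atomEqs A (C.head.subst ρ)) :=
      sol_anti Set.subset_union_right hσBody.1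
    have hv : ∀ x ∈ clauseVars C, ∃ y, ρ.toFun x = some (Term.var S y) ∧ y ∈ σ.dom := by
      intro x hx
      obtain ⟨y, hy, hhead | hbody⟩ := hρ.exists_eq_var hx
      · exact ⟨y, hy, hσeqs.2.1 (Atom.occurs_subset_eqnVars_atomEqs hAC (Or.inr hhead))⟩
      · exact ⟨y, hy, hσBody.2.1 hbody⟩
    have hAσ := Atom.subst_eq_of_mem_sol_atomEqs hAC hσeqs
    refine mem_Ans_append_cons (sol_anti Set.subset_union_left hσBody.1) hσG
      (fun x hx => hσeqs.2.1 (Atom.occurs_subset_eqnVars_atomEqs hAC (Or.inl hx))) ?_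
    refine hAσ ▸ LoopInd.of_renamed_clause hC hσG.1.1 hv fun B hB => ?_
    have hBσ := hσBody.2.2 _ (List.mem_map_of_mem hB)
    rwa [Set.image_union, Set.image_singleton, hAσ] at hBσ

theorem soundness_wrt_regular_declarative_semantics_general (S : Sig) (P coP : Set (Clause S))
    (G : List (Atom S))
    (E E' : Set (Eqn S))
    (h : OpSem S P coP ∅ G E E')
    (σ : Subst S) (hσ : σ ∈ sol E') :
    σ ∈ Ans G E (FlexReg P coP) := by
  have hloop := h.mem_Ans_loopInd σ hσ
  rw [Set.image_empty] at hloop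
  exact Ans_mono (fun _ => LoopInd.mem_FlexReg) hloop

/-- Soundness of flexible coSLD resolution w.r.t. the regular declarative semantics. -/
theorem soundness_wrt_regular_declarative_semantics (S : Sig) (P coP : Set (Clause S))
    (hP : P.Finite) (hcoP : coP.Finite)
    (G : List (Atom S)) (hG : ∀ A ∈ G, A.IsFinite)
    (E E' : Set (Eqn S)) (hE : EqnSetFin E) (hE' : EqnSetFin E')
    (h : OpSem S P coP ∅ G E E')
    (σ : Subst S) (hσ : σ ∈ sol E') :
    σ ∈ Ans G E (FlexReg P coP) :=
  soundness_wrt_regular_declarative_semantics_general S P coP G E E' h σ hσ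

end FlexLP
end

section
/- Completeness of flexible coSLD resolution with respect to the regular declarative semantics: for every logic program with coclauses (P,coP), every finite sequence G of finite atoms and every finite set of equations E, if σ ∈ Ans(G, E, FlexReg(P,coP)), then there exist a finite set of equations E' and a ground substitution θ ∈ sol(E') such that the operational semantics judgment P;coP ⊢ ∅ : ⟨G | E⟩ ⇒ E' is derivable and σ ⊑ θ. -/
/-!
An answer `σ` correct in `FlexReg P coP` puts every atom of `Gσ` in a finite comodel `I` of `P`
contained in `Ind (P ∪ coP)`. Unfolding `I` along `P` from such an atom, while recording the
atoms already unfolded as hypotheses, yields a finite derivation in `Loop(P, coP)`: each step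
removes an atom from `I \ H`, and an atom met twice is closed as a hypothesis, which is sound
because it lies in `Ind (P ∪ coP)` and so has an ordinary derivation in `P ∪ coP`.
Resolution mirrors such a derivation: a clause instance is matched by (step) on a
renamed-apart copy of the clause, with the substitution extended to the fresh variables, and a
closed hypothesis by (co-hyp), whose inner goal is solved by the same simulation for the
program `P ∪ coP` without hypotheses. The current substitution always extends `σ` and solves
the accumulated equations. When `coP = ∅`, (co-hyp) is unavailable, but then
`FlexReg P ∅ ⊆ Ind P` and plain derivations suffice.
-/

/- Framework: flexible coinductive logic programming (logic programs with coclauses).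
   Terms are possibly infinite trees, modelled as M-types of a polynomial functor. -/

namespace FlexLP

namespace Term

variable {S : Sig}

-- Naming this constructor keeps rewriting syntactic: raw `PFunctor.M.mk` terms mix the index
-- types `(TermP S).A` and `S.Func ⊕ ℕ`.
def func (f : S.Func) (ch : Fin (S.far f) → Term S) : Term S :=
  PFunctor.M.mk ⟨Sum.inl f, ch⟩

theorem dest_var (x : ℕ) : PFunctor.M.dest (Term.var S x) = ⟨Sum.inr x, fun i => i.elim0⟩ :=
  PFunctor.M.dest_mk _

theorem var_injective : Function.Injective (Term.var S) := fun x y h => by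
  have := congrArg (fun t => (PFunctor.M.dest t).1) h
  simp only [dest_var] at this
  exact Sum.inr_injective this

theorem isFinite_mk_iff {p : TermP S (TermP S).M} :
    IsFinite S (PFunctor.M.mk p) ↔ ∀ i, IsFinite S (p.2 i) := by
  constructor
  · rintro ⟨_, h⟩
    rw [PFunctor.M.dest_mk] at h
    exact h
  · intro h
    refine .mk _ ?_
    rw [PFunctor.M.dest_mk]
    exact h

theorem isFinite_func_iff {f : S.Func} {ch : Fin (S.far f) → Term S} :
    IsFinite S (func f ch) ↔ ∀ i, IsFinite S (ch i) :=
  isFinite_mk_iff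

theorem isFinite_var (x : ℕ) : IsFinite S (Term.var S x) :=
  isFinite_mk_iff.2 fun i => Fin.elim0 i

theorem occurs_mk_iff {x : ℕ} {p : TermP S (TermP S).M} :
    Occurs S x (PFunctor.M.mk p) ↔ p.1 = Sum.inr x ∨ ∃ i, Occurs S x (p.2 i) := by
  have key : ∀ t : Term S, Occurs S x t ↔ (PFunctor.M.dest t).1 = Sum.inr x ∨
      ∃ i, Occurs S x ((PFunctor.M.dest t).2 i) := fun t =>
    ⟨by rintro (⟨_, h⟩ | ⟨_, i, h⟩); exacts [Or.inl h, Or.inr ⟨i, h⟩],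
     by rintro (h | ⟨i, h⟩); exacts [.root _ h, .child _ i h]⟩
  refine (key _).trans ?_
  rw [PFunctor.M.dest_mk]

theorem occurs_func_iff {x : ℕ} {f : S.Func} {ch : Fin (S.far f) → Term S} :
    Occurs S x (func f ch) ↔ ∃ i, Occurs S x (ch i) :=
  occurs_mk_iff.trans (or_iff_right (by simp))

theorem occurs_var_iff {x y : ℕ} : Occurs S x (Term.var S y) ↔ x = y :=
  occurs_mk_iff.trans ⟨fun h => h.elim (fun h => (Sum.inr_injective h).symm)
    fun ⟨i, _⟩ => Fin.elim0 i, fun h => Or.inl (congrArg Sum.inr h.symm)⟩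

theorem IsFinite.induction {motive : (t : Term S) → IsFinite S t → Prop}
    (var : ∀ x h, motive (Term.var S x) h)
    (func : ∀ f (ch : Fin (S.far f) → Term S) (h : ∀ i, IsFinite S (ch i)),
      (∀ i, motive (ch i) (h i)) → motive (Term.func f ch) (isFinite_func_iff.2 h))
    (t : Term S) (ht : IsFinite S t) : motive t ht := by
  induction ht with
  | mk t ht ih =>
    suffices ∀ h, motive t h from this _
    rw [← PFunctor.M.mk_dest t]
    generalize PFunctor.M.dest t = p at ht ih ⊢
    obtain ⟨f | x, ch⟩ := p
    · exact fun _ => func f ch ht ih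
    · obtain rfl : ch = fun i => Fin.elim0 i := funext fun i => Fin.elim0 i
      exact var x

theorem corec_substStep_false (σ : Subst S) (s : Term S) :
    PFunctor.M.corec (substStep S σ) (s, false) = s := by
  refine PFunctor.M.bisim (fun x y => x = PFunctor.M.corec (substStep S σ) (y, false)) ?_ _ _ rfl
  rintro _ y rfl
  rcases h : PFunctor.M.dest y with ⟨l, ch⟩
  refine ⟨l, _, ch, ?_, rfl, fun i => rfl⟩
  rw [PFunctor.M.dest_corec]
  rcases l with f | x <;> simp only [substStep, h] <;> rfl

theorem func_subst (σ : Subst S) (f : S.Func) (ch : Fin (S.far f) → Term S) :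
    (func f ch).subst σ = func f fun i => (ch i).subst σ := by
  rw [← PFunctor.M.mk_dest ((func f ch).subst σ)]
  unfold Term.subst
  rw [PFunctor.M.dest_corec]
  rfl

theorem var_subst_of_some {σ : Subst S} {x : ℕ} {s : Term S} (h : σ.toFun x = some s) :
    (Term.var S x).subst σ = s := by
  rw [← PFunctor.M.mk_dest ((Term.var S x).subst σ), ← PFunctor.M.mk_dest s]
  unfold Term.subst
  rw [PFunctor.M.dest_corec]
  rcases hs : PFunctor.M.dest s with ⟨l, ch⟩
  simp only [substStep, dest_var, h, hs]
  exact congrArg (fun c => PFunctor.M.mk (⟨l, c⟩ : TermP S (TermP S).M))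
    (funext fun i => corec_substStep_false σ (ch i))

theorem var_subst_of_none {σ : Subst S} {x : ℕ} (h : σ.toFun x = none) :
    (Term.var S x).subst σ = Term.var S x := by
  rw [← PFunctor.M.mk_dest ((Term.var S x).subst σ)]
  unfold Term.subst
  rw [PFunctor.M.dest_corec]
  simp only [substStep, dest_var, h]
  exact congrArg (fun c => PFunctor.M.mk (⟨Sum.inr x, c⟩ : TermP S (TermP S).M))
    (funext fun i => Fin.elim0 i)

theorem subst_eq_of_le {θ θ' : Subst S} (hle : θ.le θ') {t : Term S} (ht : IsFinite S t)
    (hdom : ∀ x, Occurs S x t → x ∈ θ.dom) : t.subst θ' = t.subst θ := by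
  induction t, ht using IsFinite.induction with
  | var x =>
    obtain ⟨s, hs⟩ := Option.isSome_iff_exists.1 (hdom x (occurs_var_iff.2 rfl))
    rw [var_subst_of_some hs, var_subst_of_some (hle x s hs)]
  | func f ch _ ih =>
    simp only [func_subst]
    exact congrArg (func f) (funext fun i => ih i fun x hx => hdom x (occurs_func_iff.2 ⟨i, hx⟩))

theorem isFinite_subst {σ : Subst S} (hσ : ∀ x s, σ.toFun x = some s → IsFinite S s)
    {t : Term S} (ht : IsFinite S t) : IsFinite S (t.subst σ) := by
  induction t, ht using IsFinite.induction with
  | var x =>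
    cases h : σ.toFun x with
    | some s => rw [var_subst_of_some h]; exact hσ x s h
    | none => rw [var_subst_of_none h]; exact isFinite_var x
  | func f ch _ ih => rw [func_subst, isFinite_func_iff]; exact ih

theorem occurs_of_occurs_subst {σ : Subst S} {t : Term S} (ht : IsFinite S t) {x : ℕ}
    (h : Occurs S x (t.subst σ)) :
    (∃ y s, Occurs S y t ∧ σ.toFun y = some s ∧ Occurs S x s) ∨
      (Occurs S x t ∧ σ.toFun x = none) := by
  induction t, ht using IsFinite.induction with
  | var y =>
    cases hy : σ.toFun y with
    | some s =>
      rw [var_subst_of_some hy] at h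
      exact Or.inl ⟨y, s, occurs_var_iff.2 rfl, hy, h⟩
    | none =>
      rw [var_subst_of_none hy] at h
      obtain rfl := occurs_var_iff.1 h
      exact Or.inr ⟨h, hy⟩
  | func f ch _ ih =>
    rw [func_subst, occurs_func_iff] at h
    obtain ⟨i, hi⟩ := h
    simp only [occurs_func_iff]
    rcases ih i hi with ⟨y, s, hy, hs, hx⟩ | ⟨hx, hn⟩
    exacts [Or.inl ⟨y, s, ⟨i, hy⟩, hs, hx⟩, Or.inr ⟨⟨i, hx⟩, hn⟩]

theorem occurs_subst_of_none {σ : Subst S} {x : ℕ} (hx : σ.toFun x = none) {t : Term S}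
    (ht : IsFinite S t) (h : Occurs S x t) : Occurs S x (t.subst σ) := by
  induction t, ht using IsFinite.induction with
  | var y =>
    obtain rfl := occurs_var_iff.1 h
    rwa [var_subst_of_none hx]
  | func f ch _ ih =>
    rw [func_subst, occurs_func_iff]
    obtain ⟨i, hi⟩ := occurs_func_iff.1 h
    exact ⟨i, ih i hi⟩

theorem subst_subst_of_renaming_s2 {ρ θ τ : Subst S} {t : Term S} (ht : IsFinite S t)
    (h : ∀ x, Occurs S x t → ∃ y s, ρ.toFun x = some (Term.var S y) ∧
      θ.toFun y = some s ∧ τ.toFun x = some s) :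
    (t.subst ρ).subst θ = t.subst τ := by
  induction t, ht using IsFinite.induction with
  | var x =>
    obtain ⟨y, s, hρ, hθ, hτ⟩ := h x (occurs_var_iff.2 rfl)
    rw [var_subst_of_some hρ, var_subst_of_some hθ, var_subst_of_some hτ]
  | func f ch _ ih =>
    simp only [func_subst]
    exact congrArg (func f) (funext fun i => ih i fun x hx => h x (occurs_func_iff.2 ⟨i, hx⟩))

theorem finite_occurs {t : Term S} (ht : IsFinite S t) : {x | Occurs S x t}.Finite := by
  induction t, ht using IsFinite.induction with
  | var x => simp [occurs_var_iff]
  | func f ch _ ih =>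
    simp only [occurs_func_iff, Set.ofPred_exists]
    exact Set.finite_iUnion ih

end Term

namespace Subst

variable {S : Sig}

theorem le_refl (θ : Subst S) : θ.le θ := fun _ _ h => h

theorem le.trans {θ₁ θ₂ θ₃ : Subst S} (h₁₂ : θ₁.le θ₂) (h₂₃ : θ₂.le θ₃) : θ₁.le θ₃ :=
  fun x t h => h₂₃ x t (h₁₂ x t h)

theorem le.dom_subset {θ θ' : Subst S} (h : θ.le θ') : θ.dom ⊆ θ'.dom := fun x hx =>
  let ⟨t, ht⟩ := Option.isSome_iff_exists.1 hx
  Option.isSome_iff_exists.2 ⟨t, h x t ht⟩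

def Covers (θ : Subst S) (A : Atom S) : Prop :=
  A.IsFinite ∧ ∀ x, Atom.Occurs x A → x ∈ θ.dom

theorem Covers.mono {θ θ' : Subst S} {A : Atom S} (h : θ.Covers A) (hle : θ.le θ') :
    θ'.Covers A :=
  ⟨h.1, fun x hx => hle.dom_subset (h.2 x hx)⟩

theorem Covers.subst_eq {θ θ' : Subst S} {A : Atom S} (h : θ.Covers A) (hle : θ.le θ') :
    A.subst θ' = A.subst θ :=
  congrArg (Atom.mk A.pred) <| funext fun i =>
    Term.subst_eq_of_le hle (h.1 i) fun x hx => h.2 x ⟨i, hx⟩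

end Subst

section Atoms

variable {S : Sig}

theorem Atom.finite_occurs {A : Atom S} (hA : A.IsFinite) :
    {x | Atom.Occurs x A}.Finite := by
  simp only [Atom.Occurs, Set.ofPred_exists]
  exact Set.finite_iUnion fun i => Term.finite_occurs (hA i)

theorem Atom.args_subst_eq_of_subst_eq {θ θ' : Subst S} {A B : Atom S}
    (h : A.pred = B.pred) (e : A.subst θ = B.subst θ') (i : Fin (S.par A.pred)) :
    (A.args i).subst θ = (B.args (Fin.cast (congrArg S.par h) i)).subst θ' := by
  obtain ⟨pB, argsB⟩ := B
  dsimp only at h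
  subst h
  exact congrFun (eq_of_heq (Atom.mk.inj e).2) i

end Atoms

section Clauses

variable {S : Sig}

theorem clauseVars_finite (C : Clause S) : (clauseVars C).Finite := by
  refine ((Atom.finite_occurs C.finHead).union
    ((List.finite_toSet C.body).biUnion fun B hB => Atom.finite_occurs (C.finBody B hB))).subset ?_
  rintro x (hx | ⟨B, hB, hx⟩)
  · exact Or.inl hx
  · exact Or.inr (Set.mem_biUnion hB hx)

theorem clauseVars_subset_dom_of_ground {C : Clause S} {τ : Subst S}
    (hhead : (C.head.subst τ).Ground) (hbody : ∀ B ∈ C.body, (B.subst τ).Ground) :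
    clauseVars C ⊆ τ.dom := by
  have key : ∀ B : Atom S, B.IsFinite → (B.subst τ).Ground → ∀ x, B.Occurs x → x ∈ τ.dom := by
    rintro B hB hg x ⟨i, hx⟩
    by_contra hdom
    exact hg i x (Term.occurs_subst_of_none (Option.not_isSome_iff_eq_none.1 hdom) (hB i) hx)
  rintro x (hx | ⟨B, hB, hx⟩)
  · exact key _ C.finHead hhead x hx
  · exact key B (C.finBody B hB) (hbody B hB) x hx

end Clauses

section Equations

variable {S : Sig}

theorem eqnVars_union (E₁ E₂ : Set (Eqn S)) : eqnVars (E₁ ∪ E₂) = eqnVars E₁ ∪ eqnVars E₂ := by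
  ext x
  simp only [eqnVars, Set.mem_union, Set.mem_ofPred_eq, or_and_right, exists_or]

theorem atomEqs_finite (A B : Atom S) : (atomEqs A B).Finite := by
  by_cases h : A.pred = B.pred
  · refine (Set.finite_range fun i => (A.args i, B.args (Fin.cast (congrArg S.par h) i))).subset ?_
    rintro e ⟨-, i, rfl⟩
    exact ⟨i, rfl⟩
  · convert Set.finite_empty
    ext e
    simp [atomEqs, h]

theorem eqnSetFin_union_atomEqs {E : Set (Eqn S)} {A B : Atom S} (hE : EqnSetFin E)
    (hA : A.IsFinite) (hB : B.IsFinite) : EqnSetFin (E ∪ atomEqs A B) := by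
  refine ⟨hE.1.union (atomEqs_finite A B), ?_⟩
  rintro e (he | ⟨h, i, rfl⟩)
  exacts [hE.2 e he, ⟨hA i, hB _⟩]

theorem mem_sol_of_le {E : Set (Eqn S)} {θ θ' : Subst S} (hθ : θ ∈ sol E) (hE : EqnSetFin E)
    (hle : θ.le θ') (hg : θ'.Ground) : θ' ∈ sol E := by
  refine ⟨hg, hθ.2.1.trans hle.dom_subset, fun e he => ?_⟩
  rw [Term.subst_eq_of_le hle (hE.2 e he).1 fun x hx => hθ.2.1 ⟨e, he, Or.inl hx⟩,
    Term.subst_eq_of_le hle (hE.2 e he).2 fun x hx => hθ.2.1 ⟨e, he, Or.inr hx⟩]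
  exact hθ.2.2 e he

theorem mem_sol_union_atomEqs {E : Set (Eqn S)} {θ : Subst S} {A B : Atom S} (hθ : θ ∈ sol E)
    (hA : ∀ x, A.Occurs x → x ∈ θ.dom) (hB : ∀ x, B.Occurs x → x ∈ θ.dom)
    (h : A.subst θ = B.subst θ) : θ ∈ sol (E ∪ atomEqs A B) := by
  refine ⟨hθ.1, ?_, ?_⟩
  · rw [eqnVars_union]
    refine Set.union_subset hθ.2.1 ?_
    rintro x ⟨_, ⟨hp, i, rfl⟩, hx | hx⟩
    exacts [hA x ⟨i, hx⟩, hB x ⟨_, hx⟩]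
  · rintro e (he | ⟨hp, i, rfl⟩)
    exacts [hθ.2.2 e he, Atom.args_subst_eq_of_subst_eq hp h i]

end Equations

section RenamingApart

variable {S : Sig} (V : Set ℕ) (hV : V.Finite) (m : ℕ)

open Classical in
noncomputable def renameApart : Subst S where
  toFun x := if x ∈ V then some (Term.var S (x + m)) else none
  finDom := hV.subset fun x hx => by
    by_contra h
    simp [h] at hx

open Classical in
/-- `θ` extended by `x + m ↦ τ x` for `x ∈ V`: when `dom θ` lies below `m` it extends `θ`,
and it turns `renameApart V hV m` followed by itself into `τ` on `V`. -/
noncomputable def extendRenamed (θ τ : Subst S) : Subst S where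
  toFun z := if m ≤ z ∧ z - m ∈ V then τ.toFun (z - m) else θ.toFun z
  finDom := (θ.finDom.union (hV.image (· + m))).subset fun z hz => by
    by_cases h : m ≤ z ∧ z - m ∈ V
    · exact Or.inr ⟨z - m, h.2, Nat.sub_add_cancel h.1⟩
    · simp only [Set.mem_ofPred_eq, if_neg h] at hz
      exact Or.inl hz

variable {V hV m}

theorem renameApart_toFun_of_mem {x : ℕ} (hx : x ∈ V) :
    (renameApart (S := S) V hV m).toFun x = some (Term.var S (x + m)) :=
  if_pos hx

theorem renameApart_toFun_of_not_mem {x : ℕ} (hx : x ∉ V) :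
    (renameApart (S := S) V hV m).toFun x = none :=
  if_neg hx

theorem extendRenamed_toFun_add {θ τ : Subst S} {x : ℕ} (hx : x ∈ V) :
    (extendRenamed V hV m θ τ).toFun (x + m) = τ.toFun x := by
  simp [extendRenamed, hx]

theorem freshRenamingFor_renameApart {C : Clause S} {avoid : Set ℕ} (hC : clauseVars C ⊆ V)
    (havoid : ∀ x ∈ avoid, x < m) : FreshRenamingFor (renameApart V hV m) C avoid := by
  refine ⟨fun x t h => ?_, fun x hx => ?_, fun x y h hx => ?_⟩
  · by_cases hxV : x ∈ V
    · rw [renameApart_toFun_of_mem hxV] at h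
      exact ⟨x + m, (Option.some.inj h).symm, fun h' => by have := havoid _ h'; omega⟩
    · rw [renameApart_toFun_of_not_mem hxV] at h
      cases h
  · simp [Subst.dom, renameApart_toFun_of_mem (hC hx)]
  · by_cases hxV : x ∈ V
    · by_cases hyV : y ∈ V
      · rw [renameApart_toFun_of_mem hxV, renameApart_toFun_of_mem hyV] at h
        have := Term.var_injective (Option.some.inj h)
        omega
      · rw [renameApart_toFun_of_mem hxV, renameApart_toFun_of_not_mem hyV] at h
        cases h
    · rw [renameApart_toFun_of_not_mem hxV] at hx
      cases hx

theorem le_extendRenamed {θ : Subst S} (hθ : ∀ x ∈ θ.dom, x < m) (τ : Subst S) :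
    θ.le (extendRenamed V hV m θ τ) := fun x t h => by
  have := hθ x (Option.isSome_iff_exists.2 ⟨t, h⟩)
  simp only [extendRenamed]
  rw [if_neg (by omega)]
  exact h

theorem extendRenamed_ground {θ τ : Subst S} (hθ : θ.Ground) (hτ : τ.Ground) :
    (extendRenamed V hV m θ τ).Ground := fun z t h => by
  simp only [extendRenamed] at h
  split_ifs at h
  exacts [hτ _ t h, hθ z t h]

theorem Atom.isFinite_subst_renameApart {A : Atom S} (hA : A.IsFinite) :
    (A.subst (renameApart V hV m)).IsFinite := fun i =>
  Term.isFinite_subst (fun x s h => by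
    by_cases hxV : x ∈ V
    · rw [renameApart_toFun_of_mem hxV] at h
      exact Option.some.inj h ▸ Term.isFinite_var _
    · rw [renameApart_toFun_of_not_mem hxV] at h
      cases h) (hA i)

variable {θ τ : Subst S}

theorem Atom.subst_renameApart_extendRenamed (hVτ : V ⊆ τ.dom) {A : Atom S} (hA : A.IsFinite)
    (hAV : ∀ x, A.Occurs x → x ∈ V) :
    (A.subst (renameApart V hV m)).subst (extendRenamed V hV m θ τ) = A.subst τ :=
  congrArg (Atom.mk A.pred) <| funext fun i => Term.subst_subst_of_renaming_s2 (hA i) fun x hx => by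
    obtain ⟨s, hs⟩ := Option.isSome_iff_exists.1 (hVτ (hAV x ⟨i, hx⟩))
    exact ⟨x + m, s, renameApart_toFun_of_mem (hAV x ⟨i, hx⟩),
      (extendRenamed_toFun_add (hAV x ⟨i, hx⟩)).trans hs, hs⟩

theorem Atom.covers_subst_renameApart (hVτ : V ⊆ τ.dom) {A : Atom S} (hA : A.IsFinite)
    (hAV : ∀ x, A.Occurs x → x ∈ V) :
    (extendRenamed V hV m θ τ).Covers (A.subst (renameApart V hV m)) := by
  refine ⟨Atom.isFinite_subst_renameApart hA, fun z ⟨i, hz⟩ => ?_⟩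
  rcases Term.occurs_of_occurs_subst (hA i) hz with ⟨x, s, hx, hs, hzs⟩ | ⟨hx, hnone⟩
  · have hxV := hAV x ⟨i, hx⟩
    rw [renameApart_toFun_of_mem hxV] at hs
    obtain rfl := Term.occurs_var_iff.1 (Option.some.inj hs ▸ hzs)
    simpa [Subst.dom, extendRenamed_toFun_add hxV] using hVτ hxV
  · rw [renameApart_toFun_of_mem (hAV z ⟨i, hx⟩)] at hnone
    cases hnone

end RenamingApart

section Loop

variable {S : Sig}

open Filter

/-- The inference system `Loop(P, coP)` (cf. `LoopInd`) with hypotheses admissible when in `K`,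
indexed by a bound on the height of derivations. For `K = Ind (P ∪ coP)` this is `LoopInd`;
for `K = ∅` it is plain ground derivability in `P`. -/
inductive LoopN (P : Set (Clause S)) (K : Set (Atom S)) : ℕ → Set (Atom S) → Atom S → Prop
  | hyp {n : ℕ} {H : Set (Atom S)} {A : Atom S} : A ∈ H → A ∈ K → LoopN P K (n + 1) H A
  | rule {n : ℕ} {H : Set (Atom S)} {A : Atom S} (r : Atom S × List (Atom S)) :
      r ∈ GroundInst P → r.1 = A → (∀ B ∈ r.2, LoopN P K n (H ∪ {A}) B) → LoopN P K (n + 1) H A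

variable {P : Set (Clause S)} {K : Set (Atom S)}

theorem LoopN.mono {n n' : ℕ} {H : Set (Atom S)} {A : Atom S} (h : LoopN P K n H A)
    (hn : n ≤ n') : LoopN P K n' H A := by
  induction h generalizing n' with
  | hyp hH hK =>
    obtain _ | n' := n'
    · omega
    · exact .hyp hH hK
  | rule r hr h1 _ ih =>
    obtain _ | n' := n'
    · omega
    · exact .rule r hr h1 fun B hB => ih B hB (by omega)

theorem LoopN.eventually {n : ℕ} {H : Set (Atom S)} {A : Atom S} (h : LoopN P K n H A) :
    ∀ᶠ n' in atTop, LoopN P K n' H A :=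
  eventually_atTop.2 ⟨n, fun _ hn => h.mono hn⟩

theorem eventually_loopN_of_rule {H : Set (Atom S)} {r : Atom S × List (Atom S)}
    (hr : r ∈ GroundInst P) (h : ∀ B ∈ r.2, ∀ᶠ n in atTop, LoopN P K n (H ∪ {r.1}) B) :
    ∀ᶠ n in atTop, LoopN P K n H r.1 :=
  let ⟨_, hn⟩ := ((List.finite_toSet r.2).eventually_all.2 h).exists
  (LoopN.rule r hr rfl hn).eventually

theorem eventually_loopN_of_mem_ind {A : Atom S} (hA : A ∈ Ind P) (H : Set (Atom S)) :
    ∀ᶠ n in atTop, LoopN P K n H A := by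
  have hmodel : IsModel P {A | ∀ H, ∀ᶠ n in atTop, LoopN P K n H A} := by
    rintro _ ⟨r, hr, rfl, hprem⟩ H
    exact eventually_loopN_of_rule hr fun B hB => hprem B hB _
  exact Set.sInter_subset_of_mem hmodel hA H

/-- Unfolding a finite comodel `I` from `A` terminates, as every unfolded atom joins the
hypotheses and `I \ H` shrinks; an atom met again is a hypothesis in `K`. -/
theorem eventually_loopN_of_comodel {I : Set (Atom S)} (hI : I.Finite) (hco : IsComodel P I)
    (hIK : I ⊆ K) {A : Atom S} (hA : A ∈ I) (H : Set (Atom S)) :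
    ∀ᶠ n in atTop, LoopN P K n H A := by
  induction hk : (I \ H).ncard using Nat.strong_induction_on generalizing H A with
  | _ k ih =>
    by_cases hAH : A ∈ H
    · exact (LoopN.hyp (n := 0) hAH (hIK hA)).eventually
    obtain ⟨r, hr, rfl, hprem⟩ := hco hA
    have hlt : (I \ (H ∪ {r.1})).ncard < k := by
      rw [← hk, ← Set.sdiff_sdiff]
      exact Set.ncard_sdiff_singleton_lt_of_mem ⟨hA, hAH⟩ (hI.subset Set.sdiff_subset)
    exact eventually_loopN_of_rule hr fun B hB => ih _ hlt (hprem B hB) _ rfl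

end Loop

section Resolution

variable {S : Sig}

structure SolvesState (θ : Subst S) (E : Set (Eqn S)) (H : Set (Atom S)) (G : List (Atom S)) :
    Prop where
  mem_sol : θ ∈ sol E
  eqnSetFin : EqnSetFin E
  covers_goal : ∀ A ∈ G, θ.Covers A
  covers_hyps : ∀ A ∈ H, θ.Covers A

def ExtendsToComputed (P coP : Set (Clause S)) (H : Set (Atom S)) (G : List (Atom S))
    (E : Set (Eqn S)) (θ : Subst S) : Prop :=
  ∃ E' θ', OpSem S P coP H G E E' ∧ θ.le θ' ∧ θ' ∈ sol E' ∧ EqnSetFin E'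

def CohypSound (P coP : Set (Clause S)) (K : Set (Atom S)) : Prop :=
  ∀ θ E A, SolvesState θ E ∅ [A] → A.subst θ ∈ K →
    coP ≠ ∅ ∧ ExtendsToComputed (P ∪ coP) ∅ ∅ [A] E θ

theorem cohypSound_empty (P coP : Set (Clause S)) : CohypSound P coP ∅ :=
  fun _ _ _ _ h => absurd h (Set.notMem_empty _)

namespace SolvesState

variable {θ : Subst S} {E : Set (Eqn S)} {H : Set (Atom S)} {A : Atom S} {G : List (Atom S)}

theorem vars_subset_dom (hs : SolvesState θ E H G) :
    eqnVars E ∪ atomsVars H ∪ goalVars G ⊆ θ.dom := by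
  rintro x ((hx | ⟨B, hB, hx⟩) | ⟨B, hB, hx⟩)
  exacts [hs.mem_sol.2.1 hx, (hs.covers_hyps B hB).2 x hx, (hs.covers_goal B hB).2 x hx]

theorem tail {θ' : Subst S} {E' : Set (Eqn S)} (hs : SolvesState θ E H (A :: G))
    (hle : θ.le θ') (hθ' : θ' ∈ sol E') (hE' : EqnSetFin E') : SolvesState θ' E' H G :=
  ⟨hθ', hE', fun B hB => (hs.covers_goal B (List.mem_cons_of_mem A hB)).mono hle,
    fun B hB => (hs.covers_hyps B hB).mono hle⟩

theorem exists_step {τ : Subst S} {C : Clause S} (hs : SolvesState θ E H (A :: G))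
    (hτ : τ.Ground) (hhead : (C.head.subst τ).Ground) (hbody : ∀ B ∈ C.body, (B.subst τ).Ground)
    (hA : A.subst θ = C.head.subst τ) :
    ∃ ρ θ', FreshRenamingFor ρ C (eqnVars E ∪ atomsVars H ∪ goalVars (A :: G)) ∧ θ.le θ' ∧
      SolvesState θ' (E ∪ atomEqs A (C.head.subst ρ)) (H ∪ {A}) (C.body.map (·.subst ρ)) ∧
      ∀ B ∈ C.body, (B.subst ρ).subst θ' = B.subst τ := by
  have hV := clauseVars_finite C
  have hVτ := clauseVars_subset_dom_of_ground hhead hbody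
  obtain ⟨m, hm⟩ : ∃ m, ∀ x ∈ θ.dom, x < m :=
    let ⟨N, hN⟩ := θ.finDom.bddAbove
    ⟨N + 1, fun x hx => Nat.lt_succ_of_le (hN hx)⟩
  have hle := le_extendRenamed (hV := hV) hm τ
  have hAcov := hs.covers_goal A List.mem_cons_self
  have hclause : ∀ B ∈ C.head :: C.body,
      (B.subst (renameApart _ hV m)).subst (extendRenamed _ hV m θ τ) = B.subst τ ∧
        (extendRenamed _ hV m θ τ).Covers (B.subst (renameApart _ hV m)) := by
    intro B hB
    obtain ⟨hBfin, hBV⟩ : B.IsFinite ∧ ∀ x, B.Occurs x → x ∈ clauseVars C := by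
      rcases List.mem_cons.1 hB with rfl | hB
      exacts [⟨C.finHead, fun x hx => Or.inl hx⟩, ⟨C.finBody B hB, fun x hx => Or.inr ⟨B, hB, hx⟩⟩]
    exact ⟨Atom.subst_renameApart_extendRenamed hVτ hBfin hBV,
      Atom.covers_subst_renameApart hVτ hBfin hBV⟩
  obtain ⟨hhead', hheadcov⟩ := hclause C.head List.mem_cons_self
  refine ⟨_, _, freshRenamingFor_renameApart subset_rfl fun x hx => hm x (hs.vars_subset_dom hx),
    hle, ⟨?_, ?_, ?_, ?_⟩, fun B hB => (hclause B (List.mem_cons_of_mem _ hB)).1⟩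
  · refine mem_sol_union_atomEqs (mem_sol_of_le hs.mem_sol hs.eqnSetFin hle
      (extendRenamed_ground hs.mem_sol.1 hτ)) (hAcov.mono hle).2 hheadcov.2 ?_
    rw [hAcov.subst_eq hle, hA, hhead']
  · exact eqnSetFin_union_atomEqs hs.eqnSetFin hAcov.1 hheadcov.1
  · simpa only [List.forall_mem_map] using fun B hB => (hclause B (List.mem_cons_of_mem _ hB)).2
  · rintro B (hB | rfl)
    exacts [(hs.covers_hyps B hB).mono hle, hAcov.mono hle]

end SolvesState

variable {P coP : Set (Clause S)} {K : Set (Atom S)} {θ : Subst S} {E : Set (Eqn S)}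
  {H : Set (Atom S)} {A : Atom S} {G : List (Atom S)}

theorem extendsToComputed_cons_of_cohyp (hK : CohypSound P coP K)
    (hs : SolvesState θ E H (A :: G)) {B : Atom S} (hB : B ∈ H) (hAB : A.subst θ = B.subst θ)
    (hAK : A.subst θ ∈ K)
    (tail : ∀ θ' E', θ.le θ' → SolvesState θ' E' H G → ExtendsToComputed P coP H G E' θ') :
    ExtendsToComputed P coP H (A :: G) E θ := by
  have hAcov := hs.covers_goal A List.mem_cons_self
  have hBcov := hs.covers_hyps B hB
  have hsol := mem_sol_union_atomEqs hs.mem_sol hAcov.2 hBcov.2 hAB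
  obtain ⟨hcoP, E₂, θ₂, hop₁, hle₂, hθ₂, hE₂⟩ := hK θ _ A
    ⟨hsol, eqnSetFin_union_atomEqs hs.eqnSetFin hAcov.1 hBcov.1, by simpa using hAcov,
      fun _ h => absurd h (Set.notMem_empty _)⟩ hAK
  obtain ⟨E₃, θ₃, hop₂, hle₃, hθ₃, hE₃⟩ := tail θ₂ E₂ hle₂ (hs.tail hle₂ hθ₂ hE₂)
  exact ⟨E₃, θ₃, OpSem.cohyp (G1 := []) hcoP hB (congrArg Atom.pred hAB :) ⟨θ, hsol⟩ hop₁ hop₂,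
    hle₂.trans hle₃, hθ₃, hE₃⟩

theorem extendsToComputed_cons_of_step {C : Clause S} {τ : Subst S} (hC : C ∈ P)
    (hτ : τ.Ground) (hhead : (C.head.subst τ).Ground) (hbody : ∀ B ∈ C.body, (B.subst τ).Ground)
    (hs : SolvesState θ E H (A :: G)) (hA : A.subst θ = C.head.subst τ)
    (body : ∀ ρ θ' E', θ.le θ' → SolvesState θ' E' (H ∪ {A}) (C.body.map (·.subst ρ)) →
      (∀ B ∈ C.body, (B.subst ρ).subst θ' = B.subst τ) →
      ExtendsToComputed P coP (H ∪ {A}) (C.body.map (·.subst ρ)) E' θ')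
    (tail : ∀ θ' E', θ.le θ' → SolvesState θ' E' H G → ExtendsToComputed P coP H G E' θ') :
    ExtendsToComputed P coP H (A :: G) E θ := by
  obtain ⟨ρ, θ₁, hρ, hle₁, hs₁, hbody₁⟩ := hs.exists_step hτ hhead hbody hA
  obtain ⟨E₂, θ₂, hop₁, hle₂, hθ₂, hE₂⟩ := body ρ θ₁ _ hle₁ hs₁ hbody₁
  obtain ⟨E₃, θ₃, hop₂, hle₃, hθ₃, hE₃⟩ :=
    tail θ₂ E₂ (hle₁.trans hle₂) (hs.tail (hle₁.trans hle₂) hθ₂ hE₂)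
  exact ⟨E₃, θ₃, OpSem.step (G1 := []) C ρ hC hρ (congrArg Atom.pred hA :) ⟨θ₁, hs₁.mem_sol⟩
    hop₁ hop₂, (hle₁.trans hle₂).trans hle₃, hθ₃, hE₃⟩

theorem extendsToComputed_of_loopN (hK : CohypSound P coP K) (n : ℕ) (G : List (Atom S))
    (H : Set (Atom S)) (E : Set (Eqn S)) (θ : Subst S) (hs : SolvesState θ E H G)
    (hG : ∀ A ∈ G, LoopN P K n ((·.subst θ) '' H) (A.subst θ)) :
    ExtendsToComputed P coP H G E θ := by
  induction n using Nat.strong_induction_on generalizing G H E θ with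
  | _ n ihn =>
  induction G generalizing E θ with
  | nil => exact ⟨E, θ, .empty _ _ _ _, Subst.le_refl θ, hs.mem_sol, hs.eqnSetFin⟩
  | cons A G ihG =>
    have tail : ∀ θ' E', θ.le θ' → SolvesState θ' E' H G → ExtendsToComputed P coP H G E' θ' :=
      fun θ' E' hle hs' => ihG E' θ' hs' fun B hB => by
        rw [Set.image_congr fun B' hB' => (hs.covers_hyps B' hB').subst_eq hle,
          (hs.covers_goal B (List.mem_cons_of_mem A hB)).subst_eq hle]
        exact hG B (List.mem_cons_of_mem A hB)
    cases hG A List.mem_cons_self with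
    | hyp hmem hAK =>
      obtain ⟨B, hB, hBA⟩ := hmem
      exact extendsToComputed_cons_of_cohyp hK hs hB hBA.symm hAK tail
    | @rule k _ _ r hr hrA hprem =>
      obtain ⟨C, hC, τ, hτ, hr₁, hr₂, hhead, hbody⟩ := hr
      refine extendsToComputed_cons_of_step hC hτ (hr₁ ▸ hhead) (fun B hB => hbody _
        (hr₂ ▸ List.mem_map_of_mem hB)) hs (hrA.symm.trans hr₁) ?_ tail
      intro ρ θ' E' hle hs' hbody'
      refine ihn k (Nat.lt_succ_self k) _ _ E' θ' hs' ?_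
      simp only [List.forall_mem_map]
      intro B hB
      rw [Set.image_union, Set.image_singleton,
        Set.image_congr fun B' hB' => (hs.covers_hyps B' hB').subst_eq hle,
        (hs.covers_goal A List.mem_cons_self).subst_eq hle, hbody' B hB]
      exact hprem _ (hr₂ ▸ List.mem_map_of_mem hB)

theorem cohypSound_ind (hcoP : coP ≠ ∅) : CohypSound P coP (Ind (P ∪ coP)) := by
  intro θ E A hs hA
  refine ⟨hcoP, ?_⟩
  obtain ⟨n, hn⟩ := (eventually_loopN_of_mem_ind (K := ∅) hA ∅).exists
  exact extendsToComputed_of_loopN (cohypSound_empty _ _) n [A] ∅ E θ hs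
    (by simpa using hn)

theorem exists_cohypSound_loopN_of_mem_flexReg (P coP : Set (Clause S)) :
    ∃ K, CohypSound P coP K ∧
      ∀ A ∈ FlexReg P coP, ∀ᶠ n in Filter.atTop, LoopN P K n ∅ A := by
  by_cases hcoP : coP = ∅
  · subst hcoP
    refine ⟨∅, cohypSound_empty _ _, fun A ⟨I, ⟨_, _, hI⟩, hA⟩ => ?_⟩
    exact eventually_loopN_of_mem_ind (by simpa using hI hA) ∅
  · exact ⟨_, cohypSound_ind hcoP, fun A ⟨I, ⟨hfin, hco, hI⟩, hA⟩ =>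
      eventually_loopN_of_comodel hfin hco hI hA ∅⟩

end Resolution

theorem completeness_wrt_regular_declarative_semantics_general (S : Sig) (P coP : Set (Clause S))
    (G : List (Atom S)) (hG : ∀ A ∈ G, A.IsFinite)
    (E : Set (Eqn S)) (hE : EqnSetFin E)
    (σ : Subst S) (hσ : σ ∈ Ans G E (FlexReg P coP)) :
    ∃ (E' : Set (Eqn S)) (θ : Subst S), EqnSetFin E' ∧ θ ∈ sol E' ∧
      OpSem S P coP ∅ G E E' ∧ σ.le θ := by
  obtain ⟨hσE, hσG, hσI⟩ := hσ
  obtain ⟨K, hK, hloop⟩ := exists_cohypSound_loopN_of_mem_flexReg P coP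
  obtain ⟨n, hn⟩ := ((List.finite_toSet G).eventually_all.2 fun A hA =>
    hloop _ (hσI A hA)).exists
  have hs : SolvesState σ E ∅ G :=
    ⟨hσE, hE, fun A hA => ⟨hG A hA, fun x hx => hσG ⟨A, hA, hx⟩⟩,
      fun _ h => absurd h (Set.notMem_empty _)⟩
  obtain ⟨E', θ, hop, hle, hθ, hE'⟩ :=
    extendsToComputed_of_loopN hK n G ∅ E σ hs (by simpa using hn)
  exact ⟨E', θ, hE', hθ, hop, hle⟩

/-- Completeness of flexible coSLD resolution w.r.t. the regular declarative semantics: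
every answer correct in `FlexReg(P,coP)` is included in a computed answer. -/
theorem completeness_wrt_regular_declarative_semantics (S : Sig) (P coP : Set (Clause S))
    (hP : P.Finite) (hcoP : coP.Finite)
    (G : List (Atom S)) (hG : ∀ A ∈ G, A.IsFinite)
    (E : Set (Eqn S)) (hE : EqnSetFin E)
    (σ : Subst S) (hσ : σ ∈ Ans G E (FlexReg P coP)) :
    ∃ (E' : Set (Eqn S)) (θ : Subst S), EqnSetFin E' ∧ θ ∈ sol E' ∧
      OpSem S P coP ∅ G E E' ∧ σ.le θ :=
  completeness_wrt_regular_declarative_semantics_general S P coP G hG E hE σ hσ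

end FlexLP
end
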